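/- arXiv:2412.17583 — 3 statements merged into one kernel-verified Lean document; each statement's English description precedes it below -/
import Mathlib

section
/- Let f : ℕ → ℂ be 1-bounded. Then there is an absolute constant C such that for every N ≥ 2 and ε ∈ (0, 1/2), |E^log_{n ∈ [N]} f(n) − E^log_{M ∈ (N^ε, N)} E_{n ∈ [M]} f(n)| ≤ C·(1/log N + ε), where E^log_{n ∈ A} f(n) = (∑_{n∈A} f(n)/n)/(∑_{n∈A} 1/n) denotes the logarithmic average and E_{n∈[M]} f(n) = (1/M)∑_{n=1}^M f(n) the Cesàro average. -/
open scoped Classical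

/-- Logarithmic average of `f` over a finite set of positive integers. -/
noncomputable def logAvgOn (S : Finset ℕ) (f : ℕ → ℂ) : ℂ :=
  (∑ n ∈ S, f n / (n : ℂ)) / (∑ n ∈ S, (1 / (n : ℂ)))

/-- Logarithmic average of `f` over `[N] = {1,…,N}`. -/
noncomputable def logAvg (N : ℕ) (f : ℕ → ℂ) : ℂ := logAvgOn (Finset.Icc 1 N) f

/-- Cesàro average of `f` over `[M] = {1,…,M}`. -/
noncomputable def cesAvg (M : ℕ) (f : ℕ → ℂ) : ℂ := (∑ n ∈ Finset.Icc 1 M, f n) / (M : ℂ)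

/-! Summation by parts shows that `∑_{M ≤ N} cesAvg M f / M` and `∑_{n ≤ N} f n / n` differ by
`O(1)`: the increments of their difference (corrected by `cesAvg N f`) are
`(cesAvg M f - f (M + 1)) / (M + 1) ^ 2`, which are summable. Restricting the outer sum to
`M ∈ (N^ε, N)` removes logarithmic weight at most `H(N^ε) + 1/N ≤ 2 + ε log N` out of a total
weight `≥ log N`, and comparing the two normalised quotients costs `O((1 + ε log N) / log N)`. -/

open Finset

lemma logAvgOn_eq (S : Finset ℕ) (f : ℕ → ℂ) :
    logAvgOn S f = (∑ n ∈ S, f n / n) / ((∑ n ∈ S, (n : ℝ)⁻¹ : ℝ) : ℂ) := by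
  simp [logAvgOn]

lemma norm_sum_div_natCast_le {S : Finset ℕ} {f : ℕ → ℂ} (hf : ∀ n ∈ S, ‖f n‖ ≤ 1) :
    ‖∑ n ∈ S, f n / n‖ ≤ ∑ n ∈ S, (n : ℝ)⁻¹ := by
  refine (norm_sum_le _ _).trans (sum_le_sum fun n hn => ?_)
  rw [norm_div, Complex.norm_natCast, div_eq_mul_inv]
  exact mul_le_of_le_one_left (by positivity) (hf n hn)

lemma norm_logAvgOn_le_one {S : Finset ℕ} {f : ℕ → ℂ} (hf : ∀ n ∈ S, ‖f n‖ ≤ 1) :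
    ‖logAvgOn S f‖ ≤ 1 := by
  rw [logAvgOn_eq, norm_div, Complex.norm_real, Real.norm_of_nonneg (by positivity)]
  exact div_le_one_of_le₀ (norm_sum_div_natCast_le hf) (by positivity)

lemma natCast_mul_cesAvg (M : ℕ) (f : ℕ → ℂ) :
    (M : ℂ) * cesAvg M f = ∑ n ∈ Icc 1 M, f n := by
  rcases eq_or_ne M 0 with rfl | hM
  · simp
  · exact mul_div_cancel₀ _ (by exact_mod_cast hM)

lemma norm_cesAvg_le_one {f : ℕ → ℂ} (hf : ∀ n, ‖f n‖ ≤ 1) (M : ℕ) :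
    ‖cesAvg M f‖ ≤ 1 := by
  rw [cesAvg, norm_div, Complex.norm_natCast]
  refine div_le_one_of_le₀ ((norm_sum_le _ _).trans ?_) (Nat.cast_nonneg M)
  simpa using sum_le_sum fun n (_ : n ∈ Icc 1 M) => hf n

lemma cesAvg_succ (M : ℕ) (f : ℕ → ℂ) :
    cesAvg (M + 1) f = (M * cesAvg M f + f (M + 1)) / (M + 1) := by
  rw [natCast_mul_cesAvg, ← sum_Icc_succ_top (by omega), cesAvg]
  push_cast
  rfl

lemma sum_div_sub_sum_cesAvg_div_succ (f : ℕ → ℂ) (M : ℕ) :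
    (∑ n ∈ Icc 1 (M + 1), f n / n - ∑ m ∈ Icc 1 (M + 1), cesAvg m f / m - cesAvg (M + 1) f)
      - (∑ n ∈ Icc 1 M, f n / n - ∑ m ∈ Icc 1 M, cesAvg m f / m - cesAvg M f)
      = (cesAvg M f - f (M + 1)) / (M + 1) ^ 2 := by
  rw [sum_Icc_succ_top (by omega), sum_Icc_succ_top (by omega), cesAvg_succ]
  push_cast
  field_simp
  ring

lemma norm_sum_div_sub_sum_cesAvg_div_le {f : ℕ → ℂ} (hf : ∀ n, ‖f n‖ ≤ 1) (N : ℕ) :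
    ‖∑ n ∈ Icc 1 N, f n / n - ∑ m ∈ Icc 1 N, cesAvg m f / m‖ ≤ 5 := by
  set u : ℕ → ℂ := fun M =>
    ∑ n ∈ Icc 1 M, f n / n - ∑ m ∈ Icc 1 M, cesAvg m f / m - cesAvg M f
  have hstep : ∀ M, dist (u M) (u (M + 1)) ≤ 2 * (((M + 1 : ℕ) : ℝ) ^ 2)⁻¹ := by
    intro M
    rw [dist_comm, dist_eq_norm, sum_div_sub_sum_cesAvg_div_succ, norm_div, norm_pow,
      div_eq_mul_inv]
    push_cast
    gcongr
    · exact (norm_sub_le _ _).trans (by linarith [norm_cesAvg_le_one hf M, hf (M + 1)])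
    · exact_mod_cast (Complex.norm_natCast (M + 1)).le
  have hsq : ∑ M ∈ range N, (((M + 1 : ℕ) : ℝ) ^ 2)⁻¹ ≤ 2 := by
    rw [range_eq_Ico, sum_Ico_add' (fun M : ℕ => ((M : ℝ) ^ 2)⁻¹), Ico_add_one_left_eq_Ioo]
    simpa using sum_Ioo_inv_sq_le (α := ℝ) 0 (N + 1)
  have hu : ‖u N‖ ≤ 4 := by
    have h := dist_le_range_sum_of_dist_le (f := u) N fun {M} _ => hstep M
    rw [← mul_sum] at h
    have hu0 : u 0 = 0 := by simp [u, cesAvg]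
    rw [hu0, dist_zero_left] at h
    linarith
  calc _ = ‖u N + cesAvg N f‖ := by simp [u]
    _ ≤ 4 + 1 := (norm_add_le _ _).trans (add_le_add hu (norm_cesAvg_le_one hf N))
    _ = 5 := by norm_num

lemma norm_div_sub_div_le {𝕜 : Type*} [RCLike 𝕜] {a b : 𝕜} {l d : ℝ} (hd : 0 < d)
    (hdl : d ≤ l) (ha : ‖a‖ ≤ l) : ‖a / l - b / d‖ ≤ (‖a - b‖ + (l - d)) / d := by
  have hl : 0 < l := hd.trans_le hdl
  have key : a / l - b / d = (a - b) / d + a * ((l⁻¹ - d⁻¹ : ℝ) : 𝕜) := by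
    push_cast
    field_simp
    ring
  have hinv : |l⁻¹ - d⁻¹| = d⁻¹ - l⁻¹ := by
    rw [abs_of_nonpos (sub_nonpos.mpr (inv_anti₀ hd hdl))]
    ring
  rw [key, add_div]
  refine (norm_add_le _ _).trans (add_le_add ?_ ?_)
  · rw [norm_div, RCLike.norm_ofReal, abs_of_pos hd]
  · rw [norm_mul, RCLike.norm_ofReal, hinv]
    calc ‖a‖ * (d⁻¹ - l⁻¹) ≤ l * (d⁻¹ - l⁻¹) :=
          mul_le_mul_of_nonneg_right ha (sub_nonneg.mpr (inv_anti₀ hd hdl))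
      _ = (l - d) / d := by field_simp

lemma norm_logAvgOn_sub_logAvgOn_le {S T : Finset ℕ} (hST : S ⊆ T) {f g : ℕ → ℂ}
    (hf : ∀ n ∈ T, ‖f n‖ ≤ 1) (hg : ∀ n ∈ T, ‖g n‖ ≤ 1) (hS : 0 < ∑ n ∈ S, (n : ℝ)⁻¹) :
    ‖logAvgOn T f - logAvgOn S g‖ ≤
      (‖∑ n ∈ T, f n / n - ∑ n ∈ T, g n / n‖ + 2 * ∑ n ∈ T \ S, (n : ℝ)⁻¹) /
        ∑ n ∈ S, (n : ℝ)⁻¹ := by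
  have hweight := sum_sdiff hST (f := fun n : ℕ => (n : ℝ)⁻¹)
  have hdrop : ‖∑ n ∈ T, g n / n - ∑ n ∈ S, g n / n‖ ≤ ∑ n ∈ T \ S, (n : ℝ)⁻¹ := by
    rw [← sum_sdiff hST, add_sub_cancel_right]
    exact norm_sum_div_natCast_le fun n hn => hg n (sdiff_subset hn)
  rw [logAvgOn_eq, logAvgOn_eq]
  refine (norm_div_sub_div_le hS ?_ (norm_sum_div_natCast_le hf)).trans ?_
  · linarith [sum_nonneg fun n (_ : n ∈ T \ S) => inv_nonneg.mpr (Nat.cast_nonneg (α := ℝ) n)]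
  · refine div_le_div_of_nonneg_right ?_ hS.le
    linarith [norm_sub_le_norm_sub_add_norm_sub (∑ n ∈ T, f n / n) (∑ n ∈ T, g n / n)
      (∑ n ∈ S, g n / n)]

lemma log_le_sum_Icc_inv (N : ℕ) : Real.log N ≤ ∑ n ∈ Icc 1 N, (n : ℝ)⁻¹ := by
  simpa [harmonic_eq_sum_Icc] using log_le_harmonic_floor N (Nat.cast_nonneg N)

lemma sum_inv_Icc_sdiff_filter_lt_le (N : ℕ) {x : ℝ} (hx : 1 ≤ x) :
    ∑ n ∈ Icc 1 N \ (Ioo 0 N).filter (fun M => x < M), (n : ℝ)⁻¹ ≤ 2 + Real.log x := by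
  have hsub : Icc 1 N \ (Ioo 0 N).filter (fun M => x < M) ⊆ insert N (Icc 1 ⌊x⌋₊) := by
    intro n hn
    simp only [mem_sdiff, mem_Icc, mem_filter, mem_Ioo, not_and, not_lt] at hn
    rcases hn.1.2.lt_or_eq with h | h
    · exact mem_insert_of_mem (mem_Icc.mpr ⟨hn.1.1, Nat.le_floor (hn.2 ⟨hn.1.1, h⟩)⟩)
    · exact h ▸ mem_insert_self n _
  have hfloor : ∑ n ∈ Icc 1 ⌊x⌋₊, (n : ℝ)⁻¹ ≤ 1 + Real.log x := by
    simpa [harmonic_eq_sum_Icc] using harmonic_floor_le_one_add_log x hx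
  have hinsert :
      ∑ n ∈ insert N (Icc 1 ⌊x⌋₊), (n : ℝ)⁻¹ ≤ 1 + ∑ n ∈ Icc 1 ⌊x⌋₊, (n : ℝ)⁻¹ := by
    by_cases hN : N ∈ Icc 1 ⌊x⌋₊
    · rw [insert_eq_of_mem hN]
      linarith
    · rw [sum_insert hN]
      linarith [Nat.cast_inv_le_one (α := ℝ) N]
  linarith [sum_le_sum_of_subset_of_nonneg hsub fun n _ _ =>
    inv_nonneg.mpr (Nat.cast_nonneg' (α := ℝ) n)]

theorem cesaro_to_log :
    ∃ C : ℝ, 0 < C ∧ ∀ f : ℕ → ℂ, (∀ n, ‖f n‖ ≤ 1) → ∀ N : ℕ, 2 ≤ N →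
      ∀ ε : ℝ, 0 < ε → ε < 1 / 2 →
      ‖logAvg N f -
          logAvgOn ((Finset.Ioo 0 N).filter (fun M => (N : ℝ) ^ ε < (M : ℝ)))
            (fun M => cesAvg M f)‖
        ≤ C * (1 / Real.log N + ε) := by
  refine ⟨36, by norm_num, fun f hf N hN ε hε hε2 => ?_⟩
  set S : Finset ℕ := (Ioo 0 N).filter (fun M => (N : ℝ) ^ ε < (M : ℝ))
  have hST : S ⊆ Icc 1 N := (filter_subset _ _).trans fun M hM =>
    mem_Icc.mpr ⟨(mem_Ioo.mp hM).1, (mem_Ioo.mp hM).2.le⟩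
  have hN1 : (1 : ℝ) < N := by exact_mod_cast hN
  have hlog : 0 < Real.log N := Real.log_pos hN1
  by_cases hsmall : Real.log N ≤ 18
  · calc _ ≤ 1 + 1 := (norm_sub_le _ _).trans <| add_le_add
          (norm_logAvgOn_le_one fun n _ => hf n)
          (norm_logAvgOn_le_one fun M _ => norm_cesAvg_le_one hf M)
      _ ≤ 36 * (1 / Real.log N) := by rw [mul_one_div, le_div_iff₀ hlog]; linarith
      _ ≤ 36 * (1 / Real.log N + ε) := by gcongr; linarith
  have hdrop : ∑ n ∈ Icc 1 N \ S, (n : ℝ)⁻¹ ≤ 2 + ε * Real.log N := by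
    simpa [Real.log_rpow (by linarith : (0 : ℝ) < N)] using
      sum_inv_Icc_sdiff_filter_lt_le N (Real.one_le_rpow hN1.le hε.le)
  have hweight := sum_sdiff hST (f := fun n : ℕ => (n : ℝ)⁻¹)
  have hS : Real.log N / 4 ≤ ∑ n ∈ S, (n : ℝ)⁻¹ := by
    nlinarith [log_le_sum_Icc_inv N]
  calc _ ≤ (5 + 2 * (2 + ε * Real.log N)) / ∑ n ∈ S, (n : ℝ)⁻¹ := by
        refine (norm_logAvgOn_sub_logAvgOn_le hST (fun n _ => hf n)
          (fun M _ => norm_cesAvg_le_one hf M) (by linarith)).trans ?_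
        gcongr
        exact norm_sum_div_sub_sum_cesAvg_div_le hf N
    _ ≤ (5 + 2 * (2 + ε * Real.log N)) / (Real.log N / 4) :=
        div_le_div_of_nonneg_left (by positivity) (by positivity) hS
    _ = 36 * (1 / Real.log N) + 8 * ε := by field_simp; ring
    _ ≤ 36 * (1 / Real.log N + ε) := by linarith
end

section
/- Let k, ℓ, r, s ∈ ℕ with gcd(r, s) = 1. Suppose f : ℕ → ℂ is r-periodic and can be written as f(n) = ∑_{i=1}^{k} v_i · 1_{n ≡ b_i (mod a_i)} with |v_i| ≤ 1 and a_i | r, and g : ℕ → ℂ is s-periodic and can be written as g(n) = ∑_{j=1}^{ℓ} w_j · 1_{n ≡ d_j (mod c_j)} with |w_j| ≤ 1 and c_j | s. Then for any N ∈ ℕ, (1/N)∑_{n=1}^{N} f(n)g(n) = ((1/N)∑_{n=1}^{N} f(n))·((1/N)∑_{n=1}^{N} g(n)) + O(kℓ/N), where the implied constant is absolute. -/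
/-!
The defect `(1/N)∑ fg - ((1/N)∑ f)((1/N)∑ g)` is bilinear in `(f, g)`, so it splits into `kℓ`
terms `v i * w j` times the defect of the indicators of a class mod `a i` and a class mod `c j`.
As `a i ∣ r` and `c j ∣ s` are coprime, the intersection of the two classes is a single class
mod `a i * c j` (Chinese remainder theorem). A class mod `m` has `N/m + O(1)` elements in
`[1, N]`, and the main terms cancel because `N/(ac) = (N/a)(N/c)/N`, leaving at most `4/N`.
-/

open Finset

lemma abs_card_filter_modEq_Ioc_sub_div_le {a b r : ℕ} (hab : a ≤ b) (hr : 0 < r) (v : ℕ) :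
    |(#{n ∈ Ioc a b | n ≡ v [MOD r]} : ℚ) - (b - a) / r| ≤ 1 := by
  set x : ℚ := (b - v) / r
  set y : ℚ := (a - v) / r
  have hyx : y ≤ x := by unfold x y; gcongr
  have hxy : x - y = (b - a) / r := by unfold x y; ring
  rw [← Int.cast_natCast, Nat.Ioc_filter_modEq_card a b hr v,
    max_eq_left (sub_nonneg.2 (Int.floor_mono hyx))]
  push_cast
  rw [← hxy, abs_le]
  constructor <;> linarith [Int.floor_le x, Int.sub_one_lt_floor x, Int.floor_le y,
    Int.sub_one_lt_floor y]

lemma abs_card_filter_modEq_Icc_one_sub_div_le (N : ℕ) {r : ℕ} (hr : 0 < r) (v : ℕ) :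
    |(#{n ∈ Icc 1 N | n ≡ v [MOD r]} : ℝ) - N / r| ≤ 1 := by
  have h := abs_card_filter_modEq_Ioc_sub_div_le N.zero_le hr v
  rw [← Icc_add_one_left_eq_Ioc, zero_add, Nat.cast_zero, sub_zero] at h
  have h' := (Rat.cast_le (K := ℝ)).2 h
  push_cast at h'
  exact h'

lemma abs_mul_sub_mul_le {K : Type*} [Field K] [LinearOrder K] [IsStrictOrderedRing K]
    {α γ N P Q R : K} (hα₀ : 0 ≤ α) (hα₁ : α ≤ 1) (hγ₀ : 0 ≤ γ) (hγ₁ : γ ≤ 1) (hN : 1 ≤ N)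
    (hP : |P - α * N| ≤ 1) (hQ : |Q - γ * N| ≤ 1) (hR : |R - α * γ * N| ≤ 1) :
    |R * N - P * Q| ≤ 4 * N := by
  set p := P - α * N
  set q := Q - γ * N
  have hN₀ : 0 ≤ N := by linarith
  have hpq : |p * q| ≤ 1 := by rw [abs_mul]; exact mul_le_one₀ hP (abs_nonneg q) hQ
  have hαq : |α * N * q| ≤ N := by
    rw [abs_mul, abs_mul, abs_of_nonneg hα₀, abs_of_nonneg hN₀]
    nlinarith [mul_le_one₀ hα₁ (abs_nonneg q) hQ]
  have hγp : |γ * N * p| ≤ N := by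
    rw [abs_mul, abs_mul, abs_of_nonneg hγ₀, abs_of_nonneg hN₀]
    nlinarith [mul_le_one₀ hγ₁ (abs_nonneg p) hP]
  have hRN : |(R - α * γ * N) * N| ≤ N := by
    rw [abs_mul, abs_of_nonneg hN₀]
    nlinarith
  have hsplit : R * N - P * Q = (R - α * γ * N) * N - α * N * q - γ * N * p - p * q := by ring
  rw [hsplit]
  linarith [abs_sub ((R - α * γ * N) * N - α * N * q - γ * N * p) (p * q),
    abs_sub ((R - α * γ * N) * N - α * N * q) (γ * N * p),
    abs_sub ((R - α * γ * N) * N) (α * N * q)]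

lemma mul_sum_sum_mul_eq_sum_mul_mul_sum {α ι R : Type*} [CommSemiring R] (c : R)
    (S : Finset α) (I : Finset ι) (u : ι → R) (χ : ι → α → R) :
    c * ∑ n ∈ S, ∑ i ∈ I, u i * χ i n = ∑ i ∈ I, u i * (c * ∑ n ∈ S, χ i n) := by
  rw [sum_comm, mul_sum]
  refine sum_congr rfl fun i _ => ?_
  rw [mul_sum, mul_sum, mul_sum]
  exact sum_congr rfl fun n _ => by ring

section avgCov

variable {α ι κ 𝕜 : Type*} [Field 𝕜]

def avgCov (S : Finset α) (f g : α → 𝕜) : 𝕜 :=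
  (1 / (#S : 𝕜)) * ∑ n ∈ S, f n * g n
    - ((1 / (#S : 𝕜)) * ∑ n ∈ S, f n) * ((1 / (#S : 𝕜)) * ∑ n ∈ S, g n)

lemma avgCov_sum_mul_sum (S : Finset α) (I : Finset ι) (J : Finset κ) (v : ι → 𝕜) (w : κ → 𝕜)
    (φ : ι → α → 𝕜) (ψ : κ → α → 𝕜) :
    avgCov S (fun n => ∑ i ∈ I, v i * φ i n) (fun n => ∑ j ∈ J, w j * ψ j n)
      = ∑ i ∈ I, ∑ j ∈ J, v i * w j * avgCov S (φ i) (ψ j) := by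
  have hprod : ∀ n, (∑ i ∈ I, v i * φ i n) * (∑ j ∈ J, w j * ψ j n)
      = ∑ p ∈ I ×ˢ J, v p.1 * w p.2 * (φ p.1 n * ψ p.2 n) := fun n => by
    rw [sum_mul_sum, sum_product]
    exact sum_congr rfl fun i _ => sum_congr rfl fun j _ => by ring
  simp only [avgCov, hprod]
  rw [mul_sum_sum_mul_eq_sum_mul_mul_sum, mul_sum_sum_mul_eq_sum_mul_mul_sum,
    mul_sum_sum_mul_eq_sum_mul_mul_sum, sum_mul_sum, sum_product, ← sum_sub_distrib]
  refine sum_congr rfl fun i _ => ?_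
  rw [← sum_sub_distrib]
  exact sum_congr rfl fun j _ => by ring

lemma avgCov_ite_ite (S : Finset α) (p q : α → Prop) [DecidablePred p] [DecidablePred q] :
    avgCov S (fun n => if p n then (1 : 𝕜) else 0) (fun n => if q n then (1 : 𝕜) else 0)
      = (#{n ∈ S | p n ∧ q n} * #S - #{n ∈ S | p n} * #{n ∈ S | q n}) / (#S : 𝕜) ^ 2 := by
  simp only [avgCov, ite_zero_mul_ite_zero, mul_one, sum_boole]
  rcases S.eq_empty_or_nonempty with rfl | hS
  · simp
  · field_simp

end avgCov

lemma norm_sum_sum_mul_le {ι κ R : Type*} [SeminormedRing R] (I : Finset ι) (J : Finset κ)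
    (v : ι → R) (w : κ → R) (x : ι → κ → R) {ε : ℝ} (hv : ∀ i ∈ I, ‖v i‖ ≤ 1)
    (hw : ∀ j ∈ J, ‖w j‖ ≤ 1) (hx : ∀ i ∈ I, ∀ j ∈ J, ‖x i j‖ ≤ ε) :
    ‖∑ i ∈ I, ∑ j ∈ J, v i * w j * x i j‖ ≤ #I * #J * ε := by
  have hterm : ∀ i ∈ I, ∀ j ∈ J, ‖v i * w j * x i j‖ ≤ ε := fun i hi j hj =>
    calc ‖v i * w j * x i j‖ ≤ ‖v i‖ * ‖w j‖ * ‖x i j‖ :=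
          (norm_mul_le _ _).trans (by gcongr; exact norm_mul_le _ _)
      _ ≤ 1 * 1 * ε := by gcongr; exacts [hv i hi, hw j hj, hx i hi j hj]
      _ = ε := by ring
  calc ‖∑ i ∈ I, ∑ j ∈ J, v i * w j * x i j‖
      ≤ ∑ i ∈ I, ∑ j ∈ J, ‖v i * w j * x i j‖ :=
        (norm_sum_le _ _).trans (sum_le_sum fun i _ => norm_sum_le _ _)
    _ ≤ ∑ i ∈ I, ∑ j ∈ J, ε := sum_le_sum fun i hi => sum_le_sum fun j hj => hterm i hi j hj
    _ = #I * #J * ε := by simp only [sum_const, nsmul_eq_mul]; ring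

lemma norm_avgCov_modEq_le {a c N : ℕ} (hac : a.Coprime c) (ha : 0 < a) (hc : 0 < c)
    (hN : 0 < N) (b d : ℕ) :
    ‖avgCov (Icc 1 N) (fun n => if n ≡ b [MOD a] then (1 : ℂ) else 0)
      (fun n => if n ≡ d [MOD c] then (1 : ℂ) else 0)‖ ≤ 4 / N := by
  obtain ⟨e, heb, hed⟩ := Nat.chineseRemainder hac b d
  have hboth :
      {n ∈ Icc 1 N | n ≡ b [MOD a] ∧ n ≡ d [MOD c]} = {n ∈ Icc 1 N | n ≡ e [MOD a * c]} :=
    filter_congr fun n _ => by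
      rw [← Nat.modEq_and_modEq_iff_modEq_mul hac]
      exact and_congr ⟨fun h => h.trans heb.symm, fun h => h.trans heb⟩
        ⟨fun h => h.trans hed.symm, fun h => h.trans hed⟩
  set P : ℝ := ((#{n ∈ Icc 1 N | n ≡ b [MOD a]} : ℕ) : ℝ)
  set Q : ℝ := ((#{n ∈ Icc 1 N | n ≡ d [MOD c]} : ℕ) : ℝ)
  set R : ℝ := ((#{n ∈ Icc 1 N | n ≡ e [MOD a * c]} : ℕ) : ℝ)
  have hcov : avgCov (Icc 1 N) (fun n => if n ≡ b [MOD a] then (1 : ℂ) else 0)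
      (fun n => if n ≡ d [MOD c] then (1 : ℂ) else 0) = (((R * N - P * Q) / N ^ 2 : ℝ) : ℂ) := by
    rw [avgCov_ite_ite, Nat.card_Icc, add_tsub_cancel_right, hboth]
    push_cast
    rfl
  have ha' : (1 : ℝ) ≤ a := by exact_mod_cast ha
  have hc' : (1 : ℝ) ≤ c := by exact_mod_cast hc
  have hN' : (1 : ℝ) ≤ N := by exact_mod_cast hN
  have hdev : |R * N - P * Q| ≤ 4 * N := by
    refine abs_mul_sub_mul_le (α := 1 / (a : ℝ)) (γ := 1 / (c : ℝ)) (by positivity)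
      ((div_le_one (by positivity)).2 ha') (by positivity) ((div_le_one (by positivity)).2 hc') hN'
      ?_ ?_ ?_
    · rw [one_div_mul_eq_div]; exact abs_card_filter_modEq_Icc_one_sub_div_le N ha b
    · rw [one_div_mul_eq_div]; exact abs_card_filter_modEq_Icc_one_sub_div_le N hc d
    · rw [one_div_mul_one_div, one_div_mul_eq_div, ← Nat.cast_mul]
      exact abs_card_filter_modEq_Icc_one_sub_div_le N (Nat.mul_pos ha hc) e
  rw [hcov, Complex.norm_real, Real.norm_eq_abs, abs_div,
    abs_of_pos (by positivity : (0 : ℝ) < N ^ 2)]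
  calc |R * N - P * Q| / N ^ 2 ≤ 4 * N / N ^ 2 := by gcongr
    _ = 4 / (N : ℝ) := by field_simp

theorem independence_of_periodic_functions :
    ∃ C : ℝ, 0 < C ∧
      ∀ (k ℓ r s : ℕ), 0 < r → 0 < s → Nat.Coprime r s →
      ∀ (f g : ℕ → ℂ) (v : Fin k → ℂ) (a b : Fin k → ℕ) (w : Fin ℓ → ℂ) (c d : Fin ℓ → ℕ),
        (∀ n, f (n + r) = f n) →
        (∀ i, ‖v i‖ ≤ 1) → (∀ i, a i ∣ r) →
        (∀ n, f n = ∑ i, v i * (if n % a i = b i % a i then (1 : ℂ) else 0)) →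
        (∀ n, g (n + s) = g n) →
        (∀ j, ‖w j‖ ≤ 1) → (∀ j, c j ∣ s) →
        (∀ n, g n = ∑ j, w j * (if n % c j = d j % c j then (1 : ℂ) else 0)) →
        ∀ N : ℕ, 0 < N →
        ‖(1 / (N : ℂ)) * ∑ n ∈ Finset.Icc 1 N, f n * g n
            - ((1 / (N : ℂ)) * ∑ n ∈ Finset.Icc 1 N, f n)
              * ((1 / (N : ℂ)) * ∑ n ∈ Finset.Icc 1 N, g n)‖
          ≤ C * k * ℓ / N := by
  refine ⟨4, by norm_num, fun k ℓ r s hr hs hrs f g v a b w c d _ hv ha hf _ hw hc hg N hN => ?_⟩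
  have hcov : ∀ i j, ‖avgCov (Icc 1 N) (fun n => if n ≡ b i [MOD a i] then (1 : ℂ) else 0)
      (fun n => if n ≡ d j [MOD c j] then (1 : ℂ) else 0)‖ ≤ 4 / N := fun i j =>
    norm_avgCov_modEq_le ((hrs.coprime_dvd_left (ha i)).coprime_dvd_right (hc j))
      (Nat.pos_of_dvd_of_pos (ha i) hr) (Nat.pos_of_dvd_of_pos (hc j) hs) hN (b i) (d j)
  calc _ = ‖avgCov (Icc 1 N) f g‖ := by rw [avgCov, Nat.card_Icc, add_tsub_cancel_right]
    _ = ‖∑ i, ∑ j, v i * w j * avgCov (Icc 1 N)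
          (fun n => if n ≡ b i [MOD a i] then (1 : ℂ) else 0)
          (fun n => if n ≡ d j [MOD c j] then (1 : ℂ) else 0)‖ := by
      rw [← avgCov_sum_mul_sum, funext hf, funext hg]
      rfl
    _ ≤ k * ℓ * (4 / N) := by
      simpa using norm_sum_sum_mul_le univ univ v w _ (fun i _ => hv i) (fun j _ => hw j)
        (fun i _ j _ => hcov i j)
    _ = 4 * k * ℓ / N := by ring
end

section
/- Let N ∈ ℕ and let P be a set of primes contained in [1, N]. Define for n ≤ N the quantity ω_P(n) = ∑_{p ∈ P} 1_{p | n} and L = ∑_{p ∈ P} 1/p. Then (1/N) ∑_{n=1}^{N} |ω_P(n) − L| ≤ 2 √L. -/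
/-!
With `ω = dvdCount P` and `L = sumInv P`, one has `∑_{n ≤ N} 1_{d ∣ n} = ⌊N / d⌋`, so the first moment
`∑_{n ≤ N} ω(n)` is at least `N L - #P`, and, since `1_{p ∣ n} 1_{q ∣ n} = 1_{lcm(p, q) ∣ n}` with
`lcm(p, q) = p q` for distinct primes, the second moment `∑_{n ≤ N} ω(n)²` is at most `N L² + N L`.
Expanding the square gives the Turán–Kubilius variance bound
`∑_{n ≤ N} (ω(n) - L)² ≤ N L + 2 L #P ≤ 3 N L`, and Cauchy–Schwarz turns it into
`∑_{n ≤ N} |ω(n) - L| ≤ √(3 N² L) ≤ 2 N √L`.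
-/

open Finset

def dvdCount (P : Finset ℕ) (n : ℕ) : ℝ := ∑ p ∈ P, if p ∣ n then 1 else 0

noncomputable def sumInv (P : Finset ℕ) : ℝ := ∑ p ∈ P, 1 / (p : ℝ)

lemma sumInv_nonneg (P : Finset ℕ) : 0 ≤ sumInv P :=
  sum_nonneg fun _ _ => by positivity

lemma sum_Icc_ite_dvd (N d : ℕ) :
    ∑ n ∈ Icc 1 N, (if d ∣ n then (1 : ℝ) else 0) = ((N / d : ℕ) : ℝ) := by
  rw [sum_boole, ← Nat.Ioc_filter_dvd_card_eq_div, ← Icc_add_one_left_eq_Ioc, zero_add]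

lemma cast_div_sub_one_le (N d : ℕ) : (N : ℝ) / d - 1 ≤ ((N / d : ℕ) : ℝ) :=
  Nat.floor_div_eq_div (K := ℝ) N d ▸ (Nat.sub_one_lt_floor _).le

lemma cast_div_lcm_le {p q : ℕ} (hp : p.Prime) (hq : q.Prime) (N : ℕ) :
    ((N / p.lcm q : ℕ) : ℝ) ≤ (N : ℝ) / (p * q) + if p = q then (N : ℝ) / p else 0 := by
  by_cases hpq : p = q
  · subst hpq
    rw [Nat.lcm_self, if_pos rfl]
    have : (0 : ℝ) ≤ N / (p * p) := by positivity
    linarith [Nat.cast_div_le (α := ℝ) (m := N) (n := p)]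
  · rw [((Nat.coprime_primes hp hq).mpr hpq).lcm_eq_mul, if_neg hpq, add_zero]
    exact_mod_cast Nat.cast_div_le (α := ℝ) (m := N) (n := p * q)

lemma sum_sq_sub_const {ι : Type*} (s : Finset ι) (f : ι → ℝ) (c : ℝ) :
    ∑ i ∈ s, (f i - c) ^ 2 = ∑ i ∈ s, f i ^ 2 - 2 * c * ∑ i ∈ s, f i + #s * c ^ 2 := by
  have expand : ∀ i, (f i - c) ^ 2 = f i ^ 2 - 2 * c * f i + c ^ 2 := fun i => by ring
  simp only [expand, sum_add_distrib, sum_sub_distrib, sum_const, nsmul_eq_mul, ← mul_sum]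

section Moments

variable (P : Finset ℕ) (N : ℕ)

lemma sum_dvdCount : ∑ n ∈ Icc 1 N, dvdCount P n = ∑ p ∈ P, ((N / p : ℕ) : ℝ) := by
  unfold dvdCount
  rw [sum_comm]
  exact sum_congr rfl fun p _ => sum_Icc_ite_dvd N p

lemma mul_sumInv_sub_card_le_sum_dvdCount :
    N * sumInv P - #P ≤ ∑ n ∈ Icc 1 N, dvdCount P n := by
  rw [sum_dvdCount, sumInv, mul_sum, card_eq_sum_ones, Nat.cast_sum, Nat.cast_one,
    ← sum_sub_distrib]
  exact sum_le_sum fun p _ => by rw [mul_one_div]; exact cast_div_sub_one_le N p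

lemma sum_dvdCount_sq :
    ∑ n ∈ Icc 1 N, dvdCount P n ^ 2 = ∑ p ∈ P, ∑ q ∈ P, ((N / p.lcm q : ℕ) : ℝ) := by
  simp only [dvdCount, sq, sum_mul_sum, ite_zero_mul_ite_zero, mul_one, ← Nat.lcm_dvd_iff]
  rw [sum_comm]
  refine sum_congr rfl fun p _ => ?_
  rw [sum_comm]
  exact sum_congr rfl fun q _ => sum_Icc_ite_dvd N _

variable {P}

lemma sum_dvdCount_sq_le (hP : ∀ p ∈ P, p.Prime) :
    ∑ n ∈ Icc 1 N, dvdCount P n ^ 2 ≤ N * sumInv P ^ 2 + N * sumInv P := by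
  calc ∑ n ∈ Icc 1 N, dvdCount P n ^ 2
      ≤ ∑ p ∈ P, ∑ q ∈ P, ((N : ℝ) / (p * q) + if p = q then (N : ℝ) / p else 0) := by
        rw [sum_dvdCount_sq]
        exact sum_le_sum fun p hp => sum_le_sum fun q hq => cast_div_lcm_le (hP p hp) (hP q hq) N
    _ = N * sumInv P ^ 2 + N * sumInv P := by
        simp only [sum_add_distrib, sum_ite_eq]
        rw [sq, sumInv, sum_mul_sum, mul_sum, mul_sum]
        congr 1
        · exact sum_congr rfl fun p _ => by rw [mul_sum]; exact sum_congr rfl fun q _ => by ring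
        · exact sum_congr rfl fun p hp => by rw [if_pos hp, mul_one_div]

theorem sum_sq_dvdCount_sub_sumInv_le (hP : ∀ p ∈ P, p.Prime) :
    ∑ n ∈ Icc 1 N, (dvdCount P n - sumInv P) ^ 2 ≤ N * sumInv P + 2 * #P * sumInv P := by
  rw [sum_sq_sub_const, Nat.card_Icc, Nat.add_sub_cancel]
  nlinarith [sum_dvdCount_sq_le N hP, mul_sumInv_sub_card_le_sum_dvdCount P N, sumInv_nonneg P]

end Moments

lemma sum_abs_le_sqrt_card_mul_sum_sq {ι : Type*} (s : Finset ι) (f : ι → ℝ) :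
    ∑ i ∈ s, |f i| ≤ √(#s * ∑ i ∈ s, f i ^ 2) := by
  refine Real.le_sqrt_of_sq_le ?_
  simpa only [sq_abs] using sq_sum_le_card_mul_sum_sq (s := s) (f := fun i => |f i|)

theorem turan_kubilius_first_moment_general (N : ℕ) (P : Finset ℕ)
    (hP : ∀ p ∈ P, p.Prime ∧ p ≤ N) :
    (1 / (N : ℝ)) * ∑ n ∈ Finset.Icc 1 N,
        |(∑ p ∈ P, (if p ∣ n then (1 : ℝ) else 0)) - ∑ p ∈ P, (1 / (p : ℝ))|
      ≤ 2 * Real.sqrt (∑ p ∈ P, (1 / (p : ℝ))) := by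
  change (1 / (N : ℝ)) * ∑ n ∈ Icc 1 N, |dvdCount P n - sumInv P| ≤ 2 * √(sumInv P)
  have hcard : (#P : ℝ) ≤ N := by
    have : P ⊆ Icc 1 N := fun p hp => mem_Icc.mpr ⟨(hP p hp).1.one_lt.le, (hP p hp).2⟩
    exact_mod_cast (card_le_card this).trans_eq (by simp)
  have hvar := sum_sq_dvdCount_sub_sumInv_le N fun p hp => (hP p hp).1
  have hL := sumInv_nonneg P
  calc (1 / (N : ℝ)) * ∑ n ∈ Icc 1 N, |dvdCount P n - sumInv P|
      ≤ (1 / N) * √(N * (N * sumInv P + 2 * #P * sumInv P)) := by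
        gcongr
        refine (sum_abs_le_sqrt_card_mul_sum_sq _ _).trans ?_
        rw [Nat.card_Icc, Nat.add_sub_cancel]
        gcongr
    _ ≤ (1 / N) * √((2 * N) ^ 2 * sumInv P) := by
        gcongr (1 / (N : ℝ)) * √?_
        nlinarith [mul_le_mul_of_nonneg_left (mul_le_mul_of_nonneg_right hcard hL) N.cast_nonneg]
    _ ≤ 2 * √(sumInv P) := by
        rw [Real.sqrt_mul (by positivity), Real.sqrt_sq (by positivity)]
        rcases N.eq_zero_or_pos with rfl | hN
        · simp
        · exact le_of_eq (by field_simp)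

theorem turan_kubilius_first_moment (N : ℕ) (hN : 0 < N) (P : Finset ℕ)
    (hP : ∀ p ∈ P, p.Prime ∧ p ≤ N) :
    (1 / (N : ℝ)) * ∑ n ∈ Finset.Icc 1 N,
        |(∑ p ∈ P, (if p ∣ n then (1 : ℝ) else 0)) - ∑ p ∈ P, (1 / (p : ℝ))|
      ≤ 2 * Real.sqrt (∑ p ∈ P, (1 / (p : ℝ))) :=
  turan_kubilius_first_moment_general N P hP
end
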